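/- arXiv:1705.04771 — 2 statements merged into one kernel-verified Lean document; each statement's English description precedes it below -/
import Mathlib

section
/- Define f(s) = 4^{s+3} π^{2s+3/2} Γ(s+3/2) Γ(−s) ζ(−s)² L(−s,χ₄)² / (Γ(s+2)² (1+2^s) ζ(−2s)) for s ∈ ℂ. Then f has a simple pole at s = −3/2 with residue 8(4−√2) ζ(3/2)² L(3/2,χ₄)² / (7 π² ζ(3)); that is, (s + 3/2) f(s) tends to 8(4−√2) ζ(3/2)² L(3/2,χ₄)² / (7 π² ζ(3)) as s → −3/2 with s ≠ −3/2. -/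
open Filter MeasureTheory Topology

noncomputable def r2 (n : ℕ) : ℕ := {p : ℤ × ℤ | p.1 ^ 2 + p.2 ^ 2 = (n : ℤ)}.ncard

noncomputable def S2 (t : ℝ) : ℝ := ∑ n ∈ Finset.range (⌊t⌋₊ + 1), (r2 n : ℝ)

noncomputable def P2 (t : ℝ) : ℝ := S2 t - Real.pi * t

noncomputable def zetaR (s : ℝ) : ℝ := ∑' n : ℕ, 1 / (n : ℝ) ^ s

noncomputable def Lchi4R (s : ℝ) : ℝ := ∑' n : ℕ, ((ZMod.χ₄ (n : ZMod 4) : ℤ) : ℝ) / (n : ℝ) ^ s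

noncomputable def C32 : ℝ :=
  16 * (4 - Real.sqrt 2) * zetaR (3/2) ^ 2 * Lchi4R (3/2) ^ 2 / (7 * Real.pi ^ 2 * zetaR 3)

noncomputable def chi4 : DirichletCharacter ℂ 4 := ZMod.χ₄.ringHomComp (Int.castRingHom ℂ)

noncomputable def Lchi4 (s : ℂ) : ℂ := DirichletCharacter.LFunction chi4 s

noncomputable def Ch (h : ℕ) : ℝ := 8 * (-1) ^ h / h * ∑ d ∈ h.divisors, (-1) ^ d * (d : ℝ)

noncomputable def a2 (n : ℕ) : ℕ := r2 n ^ 2 + 2 * r2 n * ∑ m ∈ Finset.range n, r2 m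

noncomputable def f12 (s : ℂ) : ℂ :=
  (4:ℂ) ^ (s + 3) * (Real.pi : ℂ) ^ (2 * s + 3/2) * Complex.Gamma (s + 3/2) *
    Complex.Gamma (-s) * riemannZeta (-s) ^ 2 * Lchi4 (-s) ^ 2 /
    (Complex.Gamma (s + 2) ^ 2 * (1 + (2:ℂ) ^ s) * riemannZeta (-2 * s))

lemma zetaR_eq {r : ℝ} (hr : 1 < r) : riemannZeta ((r : ℝ) : ℂ) = ((zetaR r : ℝ) : ℂ) := by
  rw [zeta_eq_tsum_one_div_nat_cpow (by simpa using hr), zetaR, Complex.ofReal_tsum]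
  congr 1
  ext n
  rw [Complex.ofReal_div, Complex.ofReal_one, Complex.ofReal_cpow (n.cast_nonneg),
    Complex.ofReal_natCast]

lemma Lchi4_eq {r : ℝ} (hr : 1 < r) : Lchi4 ((r : ℝ) : ℂ) = ((Lchi4R r : ℝ) : ℂ) := by
  rw [Lchi4, DirichletCharacter.LFunction_eq_LSeries chi4 (by simpa using hr), LSeries,
    Lchi4R, Complex.ofReal_tsum]
  congr 1
  ext n
  rcases eq_or_ne n 0 with rfl | hn
  · simp [LSeries.term]
  · rw [LSeries.term_of_ne_zero hn]
    rw [Complex.ofReal_div, Complex.ofReal_cpow (n.cast_nonneg), Complex.ofReal_natCast]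
    congr 1

lemma gamma_shift_tendsto :
    Tendsto (fun s : ℂ => (s + 3/2) * Complex.Gamma (s + 3/2)) (𝓝[≠] (-3/2)) (𝓝 1) := by
  have h : Tendsto (fun s : ℂ => s + 3/2) (𝓝[≠] (-3/2)) (𝓝[≠] 0) := by
    refine tendsto_nhdsWithin_of_tendsto_nhds_of_eventually_within _ ?_ ?_
    · have hc : Continuous fun s : ℂ => s + 3/2 := by fun_prop
      have h0 : (-3/2 : ℂ) + 3/2 = 0 := by norm_num
      rw [← h0]
      exact (hc.tendsto _).mono_left nhdsWithin_le_nhds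
    · filter_upwards [self_mem_nhdsWithin] with s hs
      simp only [Set.mem_compl_iff, Set.mem_singleton_iff] at hs ⊢
      intro hc
      exact hs (by linear_combination hc)
  exact Complex.tendsto_self_mul_Gamma_nhds_zero.comp h

theorem residual_term_pole :
    Tendsto (fun s : ℂ => (s + 3/2) * f12 s) (𝓝[≠] (-3/2))
      (𝓝 ((8 * (4 - Real.sqrt 2) * zetaR (3/2) ^ 2 * Lchi4R (3/2) ^ 2 /
        (7 * Real.pi ^ 2 * zetaR 3) : ℝ) : ℂ)) := by
  have hm32 : ∀ m : ℕ, (3/2 : ℂ) ≠ -m := by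
    intro m h
    have := congrArg Complex.re h
    simp at this
    have hm : (0:ℝ) ≤ (m:ℝ) := m.cast_nonneg
    linarith
  have hm12 : ∀ m : ℕ, (1/2 : ℂ) ≠ -m := by
    intro m h
    have := congrArg Complex.re h
    simp at this
    have hm : (0:ℝ) ≤ (m:ℝ) := m.cast_nonneg
    linarith
  -- the continuous part
  have hg : ContinuousAt (fun s : ℂ =>
      (4:ℂ) ^ (s + 3) * (Real.pi : ℂ) ^ (2 * s + 3/2) *
      Complex.Gamma (-s) * riemannZeta (-s) ^ 2 * Lchi4 (-s) ^ 2 /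
      (Complex.Gamma (s + 2) ^ 2 * (1 + (2:ℂ) ^ s) * riemannZeta (-2 * s))) (-3/2) := by
    have h4 : ContinuousAt (fun s : ℂ => (4:ℂ) ^ (s + 3)) (-3/2) :=
      (continuousAt_const_cpow (by norm_num)).comp
        ((by fun_prop : Continuous fun s : ℂ => s + 3).continuousAt)
    have hpi : ContinuousAt (fun s : ℂ => (Real.pi : ℂ) ^ (2 * s + 3/2)) (-3/2) :=
      (continuousAt_const_cpow
        (by simpa using Real.pi_ne_zero)).comp
        ((by fun_prop : Continuous fun s : ℂ => 2 * s + 3/2).continuousAt)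
    have hGam : ContinuousAt (fun s : ℂ => Complex.Gamma (-s)) (-3/2) := by
      have h1 : ContinuousAt Complex.Gamma (-(-3/2) : ℂ) := by
        rw [show (-(-3/2) : ℂ) = 3/2 by norm_num]
        exact (Complex.differentiableAt_Gamma _ hm32).continuousAt
      exact h1.comp continuous_neg.continuousAt
    have hzet : ContinuousAt (fun s : ℂ => riemannZeta (-s)) (-3/2) := by
      have h1 : ContinuousAt riemannZeta (-(-3/2) : ℂ) := by
        rw [show (-(-3/2) : ℂ) = 3/2 by norm_num]
        exact (differentiableAt_riemannZeta (by norm_num)).continuousAt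
      exact h1.comp continuous_neg.continuousAt
    have hL : ContinuousAt (fun s : ℂ => Lchi4 (-s)) (-3/2) := by
      have h1 : ContinuousAt Lchi4 (-(-3/2) : ℂ) := by
        rw [show (-(-3/2) : ℂ) = 3/2 by norm_num]
        exact (DirichletCharacter.differentiableAt_LFunction chi4 _
          (Or.inl (by norm_num))).continuousAt
      exact h1.comp continuous_neg.continuousAt
    have hGam2 : ContinuousAt (fun s : ℂ => Complex.Gamma (s + 2)) (-3/2) := by
      have h1 : ContinuousAt Complex.Gamma ((-3/2 : ℂ) + 2) := by
        rw [show ((-3/2 : ℂ) + 2) = 1/2 by norm_num]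
        exact (Complex.differentiableAt_Gamma _ hm12).continuousAt
      exact ContinuousAt.comp (f := fun s : ℂ => s + 2) (x := (-3/2 : ℂ)) h1
        ((by fun_prop : Continuous fun s : ℂ => s + 2).continuousAt)
    have h2p : ContinuousAt (fun s : ℂ => (1 + (2:ℂ) ^ s)) (-3/2) :=
      continuousAt_const.add (continuousAt_const_cpow (by norm_num))
    have hzet2 : ContinuousAt (fun s : ℂ => riemannZeta (-2 * s)) (-3/2) := by
      have h1 : ContinuousAt riemannZeta ((-2 : ℂ) * (-3/2)) := by
        rw [show ((-2 : ℂ) * (-3/2)) = 3 by norm_num]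
        exact (differentiableAt_riemannZeta (by norm_num)).continuousAt
      exact h1.comp ((by fun_prop : Continuous fun s : ℂ => -2 * s).continuousAt)
    have hden : (Complex.Gamma ((-3/2 : ℂ) + 2) ^ 2 * (1 + (2:ℂ) ^ (-3/2 : ℂ)) *
        riemannZeta (-2 * (-3/2 : ℂ))) ≠ 0 := by
      apply mul_ne_zero
      apply mul_ne_zero
      · apply pow_ne_zero
        rw [show ((-3/2 : ℂ) + 2) = 1/2 by norm_num]
        exact Complex.Gamma_ne_zero_of_re_pos (by norm_num)
      · have h2v : (2:ℂ) ^ (-3/2 : ℂ) = (((2:ℝ) ^ (-(3/2) : ℝ) : ℝ) : ℂ) := by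
          rw [Complex.ofReal_cpow (by norm_num)]
          norm_num
        rw [h2v, show (1:ℂ) + (((2:ℝ) ^ (-(3/2) : ℝ) : ℝ) : ℂ)
            = ((1 + (2:ℝ) ^ (-(3/2) : ℝ) : ℝ) : ℂ) by push_cast; ring]
        have : (0:ℝ) < 1 + (2:ℝ) ^ (-(3/2) : ℝ) := by positivity
        exact_mod_cast this.ne'
      · rw [show ((-2 : ℂ) * (-3/2)) = 3 by norm_num]
        exact riemannZeta_ne_zero_of_one_lt_re (by norm_num)
    exact ((((h4.mul hpi).mul hGam).mul (hzet.pow 2)).mul (hL.pow 2)).div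
      ((hGam2.pow 2).mul h2p |>.mul hzet2) hden
  have key : Tendsto (fun s : ℂ => (s + 3/2) * f12 s) (𝓝[≠] (-3/2))
      (𝓝 (1 * ((4:ℂ) ^ ((-3/2 : ℂ) + 3) * (Real.pi : ℂ) ^ (2 * (-3/2 : ℂ) + 3/2) *
      Complex.Gamma (-(-3/2 : ℂ)) * riemannZeta (-(-3/2 : ℂ)) ^ 2 * Lchi4 (-(-3/2 : ℂ)) ^ 2 /
      (Complex.Gamma ((-3/2 : ℂ) + 2) ^ 2 * (1 + (2:ℂ) ^ (-3/2 : ℂ)) *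
        riemannZeta (-2 * (-3/2 : ℂ)))))) := by
    have := gamma_shift_tendsto.mul (hg.tendsto.mono_left nhdsWithin_le_nhds)
    refine this.congr (fun s => ?_)
    simp only [f12]
    ring
  convert key using 2
  -- now evaluate the constant
  rw [one_mul]
  have e4 : (4:ℂ) ^ ((-3/2 : ℂ) + 3) = 8 := by
    rw [show ((-3/2 : ℂ) + 3) = (((3/2 : ℝ)) : ℂ) by norm_num,
      show (4:ℂ) = (((4:ℝ)) : ℂ) by norm_num, ← Complex.ofReal_cpow (by norm_num)]
    have : (4:ℝ) ^ ((3/2 : ℝ)) = 8 := by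
      rw [show (3/2 : ℝ) = (3:ℝ) * (1/2) by norm_num,
        Real.rpow_mul (by norm_num : (0:ℝ) ≤ 4),
        show ((3:ℝ)) = ((3:ℕ):ℝ) by norm_num, Real.rpow_natCast,
        ← Real.sqrt_eq_rpow, show ((4:ℝ) ^ (3:ℕ)) = 8 ^ 2 by norm_num,
        Real.sqrt_sq (by norm_num)]
    rw [this]
    norm_num
  have epi : (Real.pi : ℂ) ^ (2 * (-3/2 : ℂ) + 3/2) = ((Real.pi ^ (-(3/2) : ℝ) : ℝ) : ℂ) := by
    rw [Complex.ofReal_cpow Real.pi_pos.le]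
    norm_num
  have eG32 : Complex.Gamma (-(-3/2 : ℂ)) = ((Real.sqrt Real.pi / 2 : ℝ) : ℂ) := by
    rw [show (-(-3/2 : ℂ)) = (((3/2 : ℝ)) : ℂ) by norm_num, Complex.Gamma_ofReal]
    norm_cast
    rw [show (3/2 : ℝ) = 1/2 + 1 by norm_num, Real.Gamma_add_one (by norm_num),
      Real.Gamma_one_half_eq]
    ring
  have eG12 : Complex.Gamma ((-3/2 : ℂ) + 2) = ((Real.sqrt Real.pi : ℝ) : ℂ) := by
    rw [show ((-3/2 : ℂ) + 2) = (((1/2 : ℝ)) : ℂ) by norm_num, Complex.Gamma_ofReal,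
      Real.Gamma_one_half_eq]
  have ez32 : riemannZeta (-(-3/2 : ℂ)) = ((zetaR (3/2) : ℝ) : ℂ) := by
    rw [show (-(-3/2 : ℂ)) = (((3/2 : ℝ)) : ℂ) by norm_num]
    exact zetaR_eq (by norm_num)
  have ez3 : riemannZeta (-2 * (-3/2 : ℂ)) = ((zetaR 3 : ℝ) : ℂ) := by
    rw [show (-2 * (-3/2 : ℂ)) = (((3 : ℝ)) : ℂ) by norm_num]
    exact zetaR_eq (by norm_num)
  have eL : Lchi4 (-(-3/2 : ℂ)) = ((Lchi4R (3/2) : ℝ) : ℂ) := by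
    rw [show (-(-3/2 : ℂ)) = (((3/2 : ℝ)) : ℂ) by norm_num]
    exact Lchi4_eq (by norm_num)
  have e2 : (2:ℂ) ^ (-3/2 : ℂ) = (((2:ℝ) ^ (-(3/2) : ℝ) : ℝ) : ℂ) := by
    rw [Complex.ofReal_cpow (by norm_num)]
    norm_num
  rw [e4, epi, eG32, eG12, ez32, ez3, eL, e2]
  have hZ3 : zetaR 3 ≠ 0 := by
    have h := riemannZeta_ne_zero_of_one_lt_re (s := 3) (by norm_num)
    rw [show (3:ℂ) = (((3:ℝ)) : ℂ) by norm_num, zetaR_eq (by norm_num)] at h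
    exact_mod_cast h
  have hreal : 8 * Real.pi ^ (-(3/2) : ℝ) * (Real.sqrt Real.pi / 2) * zetaR (3/2) ^ 2 *
      Lchi4R (3/2) ^ 2 / (Real.sqrt Real.pi ^ 2 * (1 + (2:ℝ) ^ (-(3/2) : ℝ)) * zetaR 3)
      = 8 * (4 - Real.sqrt 2) * zetaR (3/2) ^ 2 * Lchi4R (3/2) ^ 2 /
        (7 * Real.pi ^ 2 * zetaR 3) := by
    have hπ : Real.pi ^ (-(3/2) : ℝ) = 1 / (Real.pi * Real.sqrt Real.pi) := by
      rw [Real.rpow_neg Real.pi_pos.le, show (3/2 : ℝ) = 1 + 1/2 by norm_num,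
        Real.rpow_add Real.pi_pos, Real.rpow_one, ← Real.sqrt_eq_rpow, one_div]
    have h2 : (2:ℝ) ^ (-(3/2) : ℝ) = 1 / (2 * Real.sqrt 2) := by
      rw [Real.rpow_neg (by norm_num), show (3/2 : ℝ) = 1 + 1/2 by norm_num,
        Real.rpow_add (by norm_num), Real.rpow_one, ← Real.sqrt_eq_rpow, one_div]
    rw [hπ, h2]
    set p := Real.sqrt Real.pi with hp
    set q := Real.sqrt 2 with hq
    have hsp : p ^ 2 = Real.pi := Real.sq_sqrt Real.pi_pos.le
    have hs2 : q ^ 2 = 2 := Real.sq_sqrt (by norm_num)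
    have hp0 : p ≠ 0 := by positivity
    have hq0 : q > 0 := Real.sqrt_pos.mpr (by norm_num)
    rw [← hsp]
    have h1q : 1 + 1 / (2 * q) ≠ 0 := by positivity
    field_simp
    linear_combination (2 * zetaR (3/2) ^ 2 * Lchi4R (3/2) ^ 2) * hs2
  calc ((8 * (4 - Real.sqrt 2) * zetaR (3/2) ^ 2 * Lchi4R (3/2) ^ 2 /
        (7 * Real.pi ^ 2 * zetaR 3) : ℝ) : ℂ)
      = ((8 * Real.pi ^ (-(3/2) : ℝ) * (Real.sqrt Real.pi / 2) * zetaR (3/2) ^ 2 *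
        Lchi4R (3/2) ^ 2 / (Real.sqrt Real.pi ^ 2 * (1 + (2:ℝ) ^ (-(3/2) : ℝ)) *
        zetaR 3) : ℝ) : ℂ) := by rw [hreal]
    _ = _ := by push_cast; ring
end

section
/- For all w ∈ ℂ with Re w > 1, ∑_{h≥1} ((−1)^h ∑_{d ∣ h} (−1)^d d) h^{−w−1} = ζ(w) ζ(w+1) (1 − 2^{−w} + 4^{−w}). Equivalently, ∑_{h≥1} C_h h^{−w} = 8 ζ(w) ζ(w+1) (1 − 2^{−w} + 4^{−w}). -/
open Filter MeasureTheory Topology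

namespace ChAux
open Complex


noncomputable def F : ℕ → ℂ := fun n =>
  (((-1) ^ n * ∑ d ∈ n.divisors, (-1) ^ d * (d : ℤ) : ℤ) : ℂ)

noncomputable def idc : ℕ → ℂ := fun n => (n : ℂ)
noncomputable def u : ℕ → ℂ := fun n => if Odd n then (n : ℂ) else 0
noncomputable def ve : ℕ → ℂ := fun n => if Even n then (n : ℂ) else 0
noncomputable def v : ℕ → ℂ := fun n => if Even n then 1 else 0

lemma nat_cpow_ne {n : ℕ} (hn : n ≠ 0) (s : ℂ) : ((n : ℂ)) ^ s ≠ 0 := fun h =>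
  (Nat.cast_ne_zero.mpr hn : (n:ℂ) ≠ 0) ((cpow_eq_zero_iff _ _).mp h).1

lemma two_cpow_ne (s : ℂ) : (2 : ℂ) ^ s ≠ 0 := fun h => by
  rcases (cpow_eq_zero_iff _ _).mp h with ⟨h0, -⟩; norm_num at h0

lemma nat_split (m : ℕ) (s : ℂ) :
    (((2 * (m + 1) : ℕ)) : ℂ) ^ s = 2 ^ s * ((m + 1 : ℕ) : ℂ) ^ s := by
  rw [show ((2 * (m + 1) : ℕ) : ℂ) = ((2:ℕ):ℂ) * ((m + 1 : ℕ):ℂ) by push_cast; ring,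
    natCast_mul_natCast_cpow]
  norm_num

lemma tsum_shift (g : ℕ → ℂ) (s : ℂ) :
    ∑' h : ℕ, LSeries.term g s (h + 1) = LSeries g s := by
  refine Function.Injective.tsum_eq (g := fun h : ℕ => h + 1)
    (fun a b h => by have h' : a + 1 = b + 1 := h; omega) fun n hn => ?_
  rcases n with _ | m
  · rw [Function.mem_support, LSeries.term_zero] at hn; exact absurd rfl hn
  · exact ⟨m, rfl⟩

lemma tsum_even (g : ℕ → ℂ) (s : ℂ) :
    LSeries (fun n => if Even n then g n else 0) s
      = ∑' m : ℕ, g (2 * (m + 1)) / ((2 * (m + 1) : ℕ) : ℂ) ^ s := by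
  rw [LSeries, ← Function.Injective.tsum_eq (g := fun m : ℕ => 2 * (m + 1))
    (fun a b h => by have h' : 2 * (a + 1) = 2 * (b + 1) := h; omega)
    (f := LSeries.term _ s) ?_]
  · refine tsum_congr fun m => ?_
    rw [LSeries.term_of_ne_zero (by omega), if_pos ⟨m + 1, by ring⟩]
  · intro n hn
    rw [Function.mem_support] at hn
    rcases Nat.eq_zero_or_pos n with rfl | hpos
    · exact absurd (LSeries.term_zero ..) hn
    rcases Nat.even_or_odd n with he | ho
    · obtain ⟨k, hk⟩ := he
      exact ⟨k - 1, by show 2 * ((k - 1) + 1) = n; omega⟩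
    · rw [LSeries.term_of_ne_zero (by omega),
        if_neg (by simpa [Nat.not_even_iff_odd] using ho), zero_div] at hn
      exact absurd rfl hn

lemma L_v (s : ℂ) (hs : 1 < s.re) : LSeries v s = 2 ^ (-s) * riemannZeta s := by
  rw [show v = (fun n => if Even n then (fun _ : ℕ => (1:ℂ)) n else 0) from rfl, tsum_even,
    ← LSeries_one_eq_riemannZeta hs, ← tsum_shift 1 s, ← tsum_mul_left]
  refine tsum_congr fun m => ?_
  rw [LSeries.term_of_ne_zero (Nat.succ_ne_zero m), nat_split, Pi.one_apply, cpow_neg]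
  have h2 := two_cpow_ne s
  have hm := nat_cpow_ne (Nat.succ_ne_zero m) s
  field_simp

lemma L_idc (w : ℂ) (hw : 1 < w.re) : LSeries idc (w + 1) = riemannZeta w := by
  rw [← LSeries_one_eq_riemannZeta hw]
  refine tsum_congr fun n => ?_
  rcases Nat.eq_zero_or_pos n with rfl | hpos
  · simp
  have hn : ((n : ℂ)) ≠ 0 := Nat.cast_ne_zero.mpr (by omega)
  have hnw := nat_cpow_ne (n := n) (by omega) w
  rw [LSeries.term_of_ne_zero (by omega), LSeries.term_of_ne_zero (by omega),
    cpow_add _ _ hn, cpow_one, Pi.one_apply, idc]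
  field_simp

lemma L_ve (w : ℂ) (hw : 1 < w.re) : LSeries ve (w + 1) = 2 ^ (-w) * riemannZeta w := by
  rw [show ve = (fun n => if Even n then (fun k : ℕ => (k:ℂ)) n else 0) from rfl, tsum_even,
    ← LSeries_one_eq_riemannZeta hw, ← tsum_shift 1 w, ← tsum_mul_left]
  refine tsum_congr fun m => ?_
  have hn : (((2 * (m + 1) : ℕ) : ℂ)) ≠ 0 := Nat.cast_ne_zero.mpr (by omega)
  have h2 := two_cpow_ne w
  have hm := nat_cpow_ne (Nat.succ_ne_zero m) w
  rw [LSeries.term_of_ne_zero (Nat.succ_ne_zero m), cpow_add _ _ hn,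
    cpow_one, nat_split, cpow_neg, Pi.one_apply]
  have hn' : (((2 * (m + 1) : ℕ) : ℂ)) = 2 * ((m + 1 : ℕ) : ℂ) := by push_cast; ring
  rw [hn', one_div, ← mul_inv, mul_comm ((2:ℂ) ^ w * ((m + 1 : ℕ) : ℂ) ^ w),
    div_mul_cancel_left₀ (by rw [← hn']; exact hn)]


lemma F_eq (n : ℕ) :
    F n = LSeries.convolution idc 1 n - 2 * LSeries.convolution u v n := by
  rw [LSeries.convolution_def, LSeries.convolution_def, Finset.mul_sum,
    ← Finset.sum_sub_distrib]
  show (((-1) ^ n * ∑ d ∈ n.divisors, (-1) ^ d * (d : ℤ) : ℤ) : ℂ) = _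
  push_cast
  rw [Finset.mul_sum,
    ← Nat.sum_divisorsAntidiagonal (fun d e => ((-1:ℂ)) ^ n * ((-1) ^ d * (d:ℂ)))]
  refine Finset.sum_congr rfl fun p hp => ?_
  obtain ⟨hmul, hn0⟩ := Nat.mem_divisorsAntidiagonal.mp hp
  subst hmul
  simp only [idc, u, v, Pi.one_apply, mul_one]
  rcases Nat.even_or_odd p.1 with h1 | h1
  · have he : Even (p.1 * p.2) := h1.mul_right _
    rw [he.neg_one_pow, h1.neg_one_pow, if_neg (by simpa [Nat.not_odd_iff_even] using h1)]
    ring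
  · rw [if_pos h1]
    rcases Nat.even_or_odd p.2 with h2 | h2
    · have he : Even (p.1 * p.2) := h2.mul_left _
      rw [he.neg_one_pow, h1.neg_one_pow, if_pos h2]; ring
    · have ho : Odd (p.1 * p.2) := h1.mul h2
      rw [ho.neg_one_pow, h1.neg_one_pow, if_neg (by simpa [Nat.not_even_iff_odd] using h2)]
      ring


lemma summ_idlike {f : ℕ → ℂ} (hf : ∀ n, ‖f n‖ ≤ n) {w : ℂ} (hw : 1 < w.re) :
    LSeriesSummable f (w + 1) := by
  refine LSeriesSummable_of_le_const_mul_rpow (x := 2) (by simp [add_re, one_re]; linarith)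
    ⟨1, fun n _ => ?_⟩
  rw [one_mul]
  calc ‖f n‖ ≤ n := hf n
    _ = (n : ℝ) ^ ((2 : ℝ) - 1) := by norm_num

lemma summ_id {w : ℂ} (hw : 1 < w.re) : LSeriesSummable idc (w + 1) :=
  summ_idlike (fun n => by simp [idc]) hw

lemma summ_u {w : ℂ} (hw : 1 < w.re) : LSeriesSummable u (w + 1) :=
  summ_idlike (fun n => by unfold u; split <;> simp) hw

lemma summ_ve {w : ℂ} (hw : 1 < w.re) : LSeriesSummable ve (w + 1) :=
  summ_idlike (fun n => by unfold ve; split <;> simp) hw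

lemma summ_v {w : ℂ} (hw : 1 < w.re) : LSeriesSummable v (w + 1) :=
  LSeriesSummable_of_bounded_of_one_lt_re (m := 1)
    (fun n _ => by unfold v; split <;> simp) (by simp [add_re, one_re]; linarith)

lemma summ_one {w : ℂ} (hw : 1 < w.re) : LSeriesSummable 1 (w + 1) :=
  LSeriesSummable_one_iff.mpr (by simp [add_re, one_re]; linarith)

lemma L_u (w : ℂ) (hw : 1 < w.re) :
    LSeries u (w + 1) = (1 - 2 ^ (-w)) * riemannZeta w := by
  have huv : u = idc - ve := funext fun n => by
    simp only [u, idc, ve, Pi.sub_apply]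
    rcases Nat.even_or_odd n with h | h
    · rw [if_neg (by simpa [Nat.not_odd_iff_even] using h), if_pos h, sub_self]
    · rw [if_pos h, if_neg (by simpa [Nat.not_even_iff_odd] using h), sub_zero]
  rw [huv, LSeries_sub (summ_id hw) (summ_ve hw), L_idc w hw, L_ve w hw]
  ring

lemma main (w : ℂ) (hw : 1 < w.re) :
    LSeries F (w + 1) =
      riemannZeta w * riemannZeta (w + 1) * (1 - (2:ℂ) ^ (-w) + (4:ℂ) ^ (-w)) := by
  have hw1 : 1 < (w + 1).re := by simp [add_re, one_re]; linarith
  have hF : F = LSeries.convolution idc 1 - (2 : ℂ) • LSeries.convolution u v :=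
    funext fun n => by rw [Pi.sub_apply, Pi.smul_apply, smul_eq_mul]; exact F_eq n
  rw [hF, LSeries_sub ((summ_id hw).convolution (summ_one hw))
      (LSeriesSummable.smul 2 ((summ_u hw).convolution (summ_v hw))),
    LSeries_smul, LSeries_convolution' (summ_id hw) (summ_one hw),
    LSeries_convolution' (summ_u hw) (summ_v hw),
    L_idc w hw, LSeries_one_eq_riemannZeta hw1, L_u w hw, L_v (w + 1) hw1]
  have h4 : (4 : ℂ) ^ (-w) = 2 ^ (-w) * 2 ^ (-w) := by
    have h := natCast_cpow_natCast_mul 2 2 (-w)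
    norm_num at h
    rw [← h, show -((2 : ℂ) * w) = -w + -w by ring, cpow_add _ _ two_ne_zero]
  have h2 : (2 : ℂ) ^ (-(w + 1)) = 2 ^ (-w) * 2⁻¹ := by
    rw [show -(w + 1) = -w + (-1) by ring, cpow_add _ _ two_ne_zero, cpow_neg_one]
  rw [h4, h2]
  ring


end ChAux

theorem Ch_dirichlet_series (w : ℂ) (hw : 1 < w.re) :
    (∑' h : ℕ, ((((-1) ^ (h + 1) * ∑ d ∈ (h + 1).divisors, (-1) ^ d * (d : ℤ)) : ℤ) : ℂ) /
        ((h:ℂ) + 1) ^ (w + 1) =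
      riemannZeta w * riemannZeta (w + 1) * (1 - (2:ℂ) ^ (-w) + (4:ℂ) ^ (-w))) ∧
    (∑' h : ℕ, ((Ch (h + 1) : ℝ) : ℂ) / ((h:ℂ) + 1) ^ w =
      8 * riemannZeta w * riemannZeta (w + 1) * (1 - (2:ℂ) ^ (-w) + (4:ℂ) ^ (-w))) := by
  have e1 : ∀ h : ℕ,
      ((((-1) ^ (h + 1) * ∑ d ∈ (h + 1).divisors, (-1) ^ d * (d : ℤ)) : ℤ) : ℂ) /
        ((h:ℂ) + 1) ^ (w + 1) = LSeries.term ChAux.F (w + 1) (h + 1) := fun h => by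
    rw [LSeries.term_of_ne_zero (Nat.succ_ne_zero h), Nat.cast_succ]
    simp only [ChAux.F]
  have part1 : ∑' h : ℕ,
      ((((-1) ^ (h + 1) * ∑ d ∈ (h + 1).divisors, (-1) ^ d * (d : ℤ)) : ℤ) : ℂ) /
        ((h:ℂ) + 1) ^ (w + 1) =
      riemannZeta w * riemannZeta (w + 1) * (1 - (2:ℂ) ^ (-w) + (4:ℂ) ^ (-w)) := by
    rw [tsum_congr e1, ChAux.tsum_shift, ChAux.main w hw]
  refine ⟨part1, ?_⟩
  have e2 : ∀ h : ℕ, ((Ch (h + 1) : ℝ) : ℂ) / ((h:ℂ) + 1) ^ w =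
      8 * LSeries.term ChAux.F (w + 1) (h + 1) := fun h => by
    have hne : ((h:ℂ) + 1) ≠ 0 := by
      have := Nat.cast_add_one_ne_zero (R := ℂ) h; push_cast at this; exact this
    have hnw : ((h:ℂ) + 1) ^ w ≠ 0 := fun hz => hne ((Complex.cpow_eq_zero_iff _ _).mp hz).1
    rw [LSeries.term_of_ne_zero (Nat.succ_ne_zero h), ChAux.F, Ch]
    push_cast
    rw [Complex.cpow_add _ _ hne, Complex.cpow_one]
    field_simp
  calc ∑' h : ℕ, ((Ch (h + 1) : ℝ) : ℂ) / ((h:ℂ) + 1) ^ w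
      = ∑' h : ℕ, 8 * LSeries.term ChAux.F (w + 1) (h + 1) := tsum_congr e2
    _ = 8 * ∑' h : ℕ, LSeries.term ChAux.F (w + 1) (h + 1) := tsum_mul_left
    _ = 8 * riemannZeta w * riemannZeta (w + 1) * (1 - (2:ℂ) ^ (-w) + (4:ℂ) ^ (-w)) := by
        rw [ChAux.tsum_shift, ChAux.main w hw]; ring
end
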